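/- Let R be a commutative Noetherian local ring with maximal ideal m and residue field k, and let X be a prethick subcategory of the category mod R of finitely generated R-modules. Suppose there exists a finitely generated R-module M such that (1) depth R ≥ depth_R M + 1, and (2) for every i with 0 ≤ i ≤ depth_R M + 1 and every R-regular sequence x_1, …, x_i in m, the module M/(x_1, …, x_i)M belongs to X. Then the residue field k belongs to X. -/

import Mathlib

universe u

open CategoryTheory IsLocalRing RingTheory.Sequence Opposite

noncomputable section

variable (R : Type u) [CommRing R]

/-- A *prethick* subcategory of the category `mod R` of finitely generated `R`-modules:
a class of finitely generated modules closed under isomorphisms, finite direct sums,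
direct summands, kernels of epimorphisms and cokernels of monomorphisms. -/
structure IsPrethick (X : ∀ (M : Type u) [AddCommGroup M] [Module R M], Prop) : Prop where
  closed_iso : ∀ (M N : Type u) [AddCommGroup M] [Module R M] [AddCommGroup N] [Module R N]
    [Module.Finite R M] [Module.Finite R N], (M ≃ₗ[R] N) → X M → X N
  closed_sum : ∀ (M N : Type u) [AddCommGroup M] [Module R M] [AddCommGroup N] [Module R N]
    [Module.Finite R M] [Module.Finite R N], X M → X N → X (M × N)
  closed_summand : ∀ (M N P : Type u) [AddCommGroup M] [Module R M] [AddCommGroup N]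
    [Module R N] [AddCommGroup P] [Module R P]
    [Module.Finite R M] [Module.Finite R N] [Module.Finite R P],
    (M ≃ₗ[R] N × P) → X M → X N
  closed_ker_epi : ∀ (L M N : Type u) [AddCommGroup L] [Module R L] [AddCommGroup M] [Module R M]
    [AddCommGroup N] [Module R N] [Module.Finite R L] [Module.Finite R M] [Module.Finite R N]
    (f : L →ₗ[R] M) (g : M →ₗ[R] N), Function.Injective f → Function.Surjective g →
    LinearMap.range f = LinearMap.ker g → X M → X N → X L
  closed_coker_mono : ∀ (L M N : Type u) [AddCommGroup L] [Module R L] [AddCommGroup M]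
    [Module R M] [AddCommGroup N] [Module R N]
    [Module.Finite R L] [Module.Finite R M] [Module.Finite R N]
    (f : L →ₗ[R] M) (g : M →ₗ[R] N), Function.Injective f → Function.Surjective g →
    LinearMap.range f = LinearMap.ker g → X L → X M → X N

/-- The depth of a module `M` over a local ring `R`: the supremum of the lengths of
`M`-regular sequences consisting of elements of the maximal ideal. -/
def moduleDepth [IsLocalRing R] (M : Type u) [AddCommGroup M] [Module R M] : ℕ∞ :=
  sSup {n : ℕ∞ | ∃ rs : List R, (∀ r ∈ rs, r ∈ maximalIdeal R) ∧
    IsWeaklyRegular M rs ∧ (rs.length : ℕ∞) = n}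

/-- An `R`-regular sequence (of elements of the maximal ideal of the local ring `R`). -/
def IsRegularSeq [IsLocalRing R] (rs : List R) : Prop :=
  (∀ r ∈ rs, r ∈ maximalIdeal R) ∧ IsWeaklyRegular R rs

/-- A subsystem of parameters for the local ring `R`: a sequence `x₁, …, xᵢ` of elements of
the maximal ideal with `dim R/(x₁, …, xᵢ) + i = dim R`. -/
def IsSubsystemOfParameters [IsLocalRing R] (rs : List R) : Prop :=
  (∀ r ∈ rs, r ∈ maximalIdeal R) ∧
    ringKrullDim (R ⧸ Ideal.ofList rs) + (rs.length : WithBot ℕ∞) = ringKrullDim R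

/-- `M` has finite projective dimension over `R`, via the standard characterization:
`pd_R M ≤ n` iff `Ext^i(M, -) = 0` for all `i > n`. -/
def HasFinProjDim (M : Type u) [AddCommGroup M] [Module R M] : Prop :=
  ∃ n : ℕ, ∀ (N : ModuleCat.{u} R) (i : ℕ), n < i →
    Subsingleton (((Ext R (ModuleCat.{u} R) i).obj (op (ModuleCat.of R M))).obj N)

/-- `N` has finite injective dimension over `R`, via the standard characterization:
`id_R N ≤ n` iff `Ext^i(-, N) = 0` for all `i > n`. -/
def HasFinInjDim (N : Type u) [AddCommGroup N] [Module R N] : Prop :=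
  ∃ n : ℕ, ∀ (X : ModuleCat.{u} R) (i : ℕ), n < i →
    Subsingleton (((Ext R (ModuleCat.{u} R) i).obj (op X)).obj (ModuleCat.of R N))

/-- The `i`-th Tor module `Tor_i^R(M, N)`. -/
def TorMod (M N : Type u) [AddCommGroup M] [Module R M] [AddCommGroup N] [Module R N]
    (i : ℕ) : ModuleCat.{u} R :=
  ((Tor' (ModuleCat.{u} R) i).obj (ModuleCat.of R M)).obj (ModuleCat.of R N)

/-- The `i`-th Ext module `Ext^i_R(M, N)`. -/
def ExtMod (M N : Type u) [AddCommGroup M] [Module R M] [AddCommGroup N] [Module R N]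
    (i : ℕ) : ModuleCat.{u} R :=
  ((Ext R (ModuleCat.{u} R) i).obj (op (ModuleCat.of R M))).obj (ModuleCat.of R N)

/-- The `j`-th Betti number `β_j^R(M) = dim_k Tor_j^R(M, k)`, expressed as the length
(Krull dimension of the submodule lattice) of the `R`-module `Tor_j^R(M, k)`, which is
annihilated by the maximal ideal, so its length equals its `k`-dimension. -/
def bettiNumber [IsLocalRing R] (M : Type u) [AddCommGroup M] [Module R M] (j : ℕ) :
    WithBot (WithTop ℕ) :=
  Order.krullDim (Submodule R (TorMod R M (ResidueField R) j))

/-- `M` has bounded Betti numbers: `sup_j β_j^R(M) < ∞`. -/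
def HasBoundedBettiNumbers [IsLocalRing R] (M : Type u) [AddCommGroup M] [Module R M] : Prop :=
  ∃ B : ℕ, ∀ j : ℕ, bettiNumber R M j ≤ (B : WithBot (WithTop ℕ))

/-- `M` has finite complexity: there are `t ≥ 0` and `c > 0` with
`β_j^R(M) ≤ c * j ^ (t - 1)` for all sufficiently large `j`. -/
def HasFiniteComplexity [IsLocalRing R] (M : Type u) [AddCommGroup M] [Module R M] : Prop :=
  ∃ t c : ℕ, 0 < c ∧ ∃ j₀ : ℕ, ∀ j : ℕ, j₀ ≤ j →
    bettiNumber R M j ≤ ((c * j ^ (t - 1) : ℕ) : WithBot (WithTop ℕ))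

end


section AuxPrethick
open Submodule
open scoped Pointwise



variable (R : Type u) [CommRing R]

/-- The module has a nonzero element killed by the maximal ideal. -/
def HasSocle [IsLocalRing R] (C : Type u) [AddCommGroup C] [Module R C] : Prop :=
  ∃ z : C, z ≠ 0 ∧ ∀ a ∈ maximalIdeal R, a • z = 0

variable {R}

lemma isAssociatedPrime_iff_ann [IsNoetherianRing R] {q : Ideal R} {C : Type u} [AddCommGroup C]
    [Module R C] : IsAssociatedPrime q C ↔ q.IsPrime ∧ ∃ z : C, q = (R ∙ z).annihilator := by
  rw [isAssociatedPrime_iff]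
  have : ∀ z : C, (⊥ : Submodule R C).colon {z} = (R ∙ z).annihilator := fun z => by
    ext a
    rw [Submodule.mem_colon_singleton, Submodule.mem_annihilator_span_singleton,
      Submodule.mem_bot]
  simp only [this]

lemma hasSocle_iff_assoc [IsLocalRing R] [IsNoetherianRing R] (C : Type u) [AddCommGroup C] [Module R C] :
    HasSocle R C ↔ maximalIdeal R ∈ associatedPrimes R C := by
  constructor
  · rintro ⟨z, hz, hsoc⟩
    refine (AssociatedPrimes.mem_iff (I := maximalIdeal R) (M := C)).mpr
      (isAssociatedPrime_iff_ann.mpr ⟨(maximalIdeal.isMaximal R).isPrime, z, le_antisymm ?_ ?_⟩)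
    · intro a ha
      exact (Submodule.mem_annihilator_span_singleton _ _).mpr (hsoc a ha)
    · refine IsLocalRing.le_maximalIdeal ?_
      intro htop
      have h1 : (1 : R) ∈ (R ∙ z).annihilator := htop ▸ Submodule.mem_top
      exact hz (by simpa using (Submodule.mem_annihilator_span_singleton _ _).mp h1)
  · intro hpz
    obtain ⟨hp, z, hz⟩ := isAssociatedPrime_iff_ann.mp hpz
    have hz0 : z ≠ 0 := by
      rintro rfl
      apply hp.ne_top
      rw [hz, Submodule.span_singleton_eq_bot.mpr rfl, Submodule.annihilator_bot]
    exact ⟨z, hz0, fun a ha => (Submodule.mem_annihilator_span_singleton _ _).mp (hz ▸ ha)⟩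

lemma hasSocle_congr [IsLocalRing R] [IsNoetherianRing R] {C C' : Type u} [AddCommGroup C] [Module R C]
    [AddCommGroup C'] [Module R C'] (e : C ≃ₗ[R] C') : HasSocle R C ↔ HasSocle R C' := by
  rw [hasSocle_iff_assoc, hasSocle_iff_assoc, AssociatedPrimes.mem_iff, AssociatedPrimes.mem_iff,
    e.isAssociatedPrime_iff]

lemma not_hasSocle_of_regular [IsLocalRing R] {C : Type u} [AddCommGroup C] [Module R C]
    {x : R} (hxm : x ∈ maximalIdeal R) (hx : IsSMulRegular C x) : ¬ HasSocle R C := by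
  rintro ⟨z, hz, hsoc⟩
  exact hz (hx (show x • z = x • 0 by rw [hsoc x hxm, smul_zero]))

lemma assoc_ne_max_of_regular [IsLocalRing R] [IsNoetherianRing R] {C : Type u} [AddCommGroup C] [Module R C]
    {x : R} (hxm : x ∈ maximalIdeal R) (hx : IsSMulRegular C x) :
    ∀ p ∈ associatedPrimes R C, p ≠ maximalIdeal R := by
  intro p hp heq
  subst heq
  exact not_hasSocle_of_regular hxm hx ((hasSocle_iff_assoc C).mpr hp)

/-- An associated prime of the ambient module is associated to a submodule or the quotient. -/
lemma IsAssociatedPrime.subquot [IsNoetherianRing R] {C : Type u} [AddCommGroup C] [Module R C] {q : Ideal R}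
    (N : Submodule R C) (hq : IsAssociatedPrime q C) :
    IsAssociatedPrime q ↥N ∨ IsAssociatedPrime q (C ⧸ N) := by
  obtain ⟨hprime, z, hz⟩ := isAssociatedPrime_iff_ann.mp hq
  by_cases hcap : ∀ a : R, a • z ∈ N → a • z = 0
  · right
    refine isAssociatedPrime_iff_ann.mpr ⟨hprime, N.mkQ z, ?_⟩
    rw [hz]
    ext a
    rw [Submodule.mem_annihilator_span_singleton, Submodule.mem_annihilator_span_singleton,
      ← map_smul, Submodule.mkQ_apply, Submodule.Quotient.mk_eq_zero]
    exact ⟨fun h => h ▸ N.zero_mem, fun h => hcap a h⟩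
  · left
    push_neg at hcap
    obtain ⟨a, haN, ha0⟩ := hcap
    have haq : a ∉ q := fun h => ha0 (by
      have := (Submodule.mem_annihilator_span_singleton z a).mp (hz ▸ h)
      exact this)
    refine isAssociatedPrime_iff_ann.mpr ⟨hprime, ⟨a • z, haN⟩, ?_⟩
    ext b
    rw [Submodule.mem_annihilator_span_singleton]
    constructor
    · intro hb
      have hbz : b • z = 0 := (Submodule.mem_annihilator_span_singleton z b).mp (hz ▸ hb)
      ext
      show b • (a • z) = 0
      rw [smul_comm, hbz, smul_zero]
    · intro hb
      have : (b * a) • z = 0 := by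
        have := congrArg (Subtype.val) hb
        simpa [mul_smul, smul_comm b a z] using this
      have hba : b * a ∈ q := hz ▸ (Submodule.mem_annihilator_span_singleton z _).mpr this
      rcases hprime.mem_or_mem hba with h | h
      · exact h
      · exact absurd h haq

lemma associatedPrime_quotient_prime [IsNoetherianRing R] {p q : Ideal R} (hp : p.IsPrime)
    (hq : IsAssociatedPrime q (R ⧸ p)) : q = p := by
  obtain ⟨hq', z, hz⟩ := isAssociatedPrime_iff_ann.mp hq
  obtain ⟨r, rfl⟩ := Submodule.mkQ_surjective p z
  have hr : r ∉ p := by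
    intro h
    apply hq'.ne_top
    rw [hz]
    have : p.mkQ r = 0 := (Submodule.Quotient.mk_eq_zero _).mpr h
    rw [this, Submodule.span_singleton_eq_bot.mpr rfl, Submodule.annihilator_bot]
  ext a
  rw [hz, Submodule.mem_annihilator_span_singleton, ← map_smul, Submodule.mkQ_apply,
    Submodule.Quotient.mk_eq_zero, smul_eq_mul]
  exact ⟨fun h => ((hp.mem_or_mem h).resolve_right hr),
    fun h => Ideal.mul_mem_right _ _ h⟩

theorem associatedPrimes_finite [IsNoetherianRing R] (C : Type u) [AddCommGroup C] [Module R C]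
    [Module.Finite R C] : (associatedPrimes R C).Finite := by
  have key : ∀ NN : Submodule R C, (associatedPrimes R (C ⧸ NN)).Finite := by
    intro NN
    refine IsNoetherian.induction
      (P := fun NN : Submodule R C => (associatedPrimes R (C ⧸ NN)).Finite) ?_ NN
    intro N IH
    by_cases hA : associatedPrimes R (C ⧸ N) = ∅
    · rw [hA]; exact Set.finite_empty
    obtain ⟨p, hp⟩ := Set.nonempty_iff_ne_empty.mpr hA
    obtain ⟨hprime, z, hz⟩ := isAssociatedPrime_iff_ann.mp hp
    obtain ⟨c, rfl⟩ := N.mkQ_surjective z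
    have hzero : N.mkQ c ≠ 0 := by
      intro h
      apply hprime.ne_top
      rw [hz, h, Submodule.span_singleton_eq_bot.mpr rfl, Submodule.annihilator_bot]
    have hc : c ∉ N := fun h => hzero ((Submodule.Quotient.mk_eq_zero _).mpr h)
    set N' : Submodule R C := N ⊔ R ∙ c with hN'
    have hlt : N < N' := by
      refine lt_of_le_of_ne le_sup_left (fun h => hc ?_)
      rw [h]
      exact Submodule.mem_sup_right (Submodule.mem_span_singleton_self c)
    have hfin' := IH N' hlt
    refine Set.Finite.subset (hfin'.insert p) ?_
    intro q hq
    rcases IsAssociatedPrime.subquot (R ∙ (N.mkQ c)) hq with h | h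
    · refine Set.mem_insert_iff.mpr (Or.inl ?_)
      -- ↥(R ∙ z) ≃ₗ R ⧸ p
      have hker : LinearMap.ker (LinearMap.toSpanSingleton R (C ⧸ N) (N.mkQ c)) = p := by
        ext a
        rw [LinearMap.mem_ker, hz, Submodule.mem_annihilator_span_singleton]
        rfl
      have e : (R ⧸ p) ≃ₗ[R] ↥(R ∙ (N.mkQ c)) :=
        (Submodule.quotEquivOfEq _ _ hker.symm) ≪≫ₗ
          (LinearMap.quotKerEquivRange (LinearMap.toSpanSingleton R (C ⧸ N) (N.mkQ c))) ≪≫ₗ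
          (LinearEquiv.ofEq _ _ (LinearMap.span_singleton_eq_range R (C ⧸ N) (N.mkQ c)).symm)
      have : IsAssociatedPrime q (R ⧸ p) := (e.isAssociatedPrime_iff).mpr h
      exact associatedPrime_quotient_prime hprime this
    · refine Set.mem_insert_iff.mpr (Or.inr ?_)
      have hmap : Submodule.map N.mkQ N' = R ∙ (N.mkQ c) := by
        rw [hN', Submodule.map_sup, Submodule.map_span, Set.image_singleton]
        have h0 : Submodule.map N.mkQ N = ⊥ := by
          refine le_bot_iff.mp ?_
          rintro x ⟨y, hy, rfl⟩
          simpa using (Submodule.Quotient.mk_eq_zero N).mpr hy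
        rw [h0, bot_sup_eq]
      have e : ((C ⧸ N) ⧸ (R ∙ (N.mkQ c))) ≃ₗ[R] (C ⧸ N') :=
        (Submodule.quotEquivOfEq _ _ hmap.symm) ≪≫ₗ
          Submodule.quotientQuotientEquivQuotient N N' le_sup_left
      exact (AssociatedPrimes.mem_iff).mpr ((e.isAssociatedPrime_iff).mp h)
  have e := Submodule.quotEquivOfEqBot (⊥ : Submodule R C) rfl
  rw [← LinearEquiv.AssociatedPrimes.eq e]
  exact key ⊥



theorem pick_avoid (I B : Ideal R) (hB : ¬ I ≤ B) (P : Set (Ideal R))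
    (hP : P.Finite) (hprime : ∀ p ∈ P, p.IsPrime) (hnle : ∀ p ∈ P, ¬ I ≤ p) :
    ∃ x ∈ I, x ∉ B ∧ ∀ p ∈ P, x ∉ p := by
  classical
  by_contra hcon
  push_neg at hcon
  have hsub : (I : Set R) ⊆
      ⋃ J ∈ ((insert B hP.toFinset : Finset (Ideal R)) : Set (Ideal R)), (J : Set R) := by
    intro x hx
    by_cases hxB : x ∈ B
    · exact Set.mem_biUnion (Finset.mem_coe.mpr (Finset.mem_insert_self _ _)) hxB
    · obtain ⟨p, hp, hxp⟩ := hcon x hx hxB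
      exact Set.mem_biUnion
        (Finset.mem_coe.mpr (Finset.mem_insert_of_mem (hP.mem_toFinset.mpr hp))) hxp
  have hp' : ∀ J ∈ (insert B hP.toFinset : Finset (Ideal R)), J ≠ B → J ≠ B → J.IsPrime := by
    intro J hJ hne _
    rcases Finset.mem_insert.mp hJ with h | h
    · exact absurd h hne
    · exact hprime J (hP.mem_toFinset.mp h)
  obtain ⟨J, hJmem, hJle⟩ := (Ideal.subset_union_prime (f := fun J : Ideal R => J) B B hp').mp hsub
  rcases Finset.mem_insert.mp hJmem with h | h
  · exact hB (h ▸ hJle)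
  · exact hnle J (hP.mem_toFinset.mp h) hJle

theorem pick_avoid' (I : Ideal R) (P : Set (Ideal R))
    (hP : P.Finite) (hprime : ∀ p ∈ P, p.IsPrime) (hnle : ∀ p ∈ P, ¬ I ≤ p) :
    ∃ x ∈ I, ∀ p ∈ P, x ∉ p := by
  classical
  by_contra hcon
  push_neg at hcon
  have hsub : (I : Set R) ⊆ ⋃ J ∈ ((hP.toFinset : Finset (Ideal R)) : Set (Ideal R)),
      (J : Set R) := by
    intro x hx
    obtain ⟨p, hp, hxp⟩ := hcon x hx
    exact Set.mem_biUnion (Finset.mem_coe.mpr (hP.mem_toFinset.mpr hp)) hxp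
  have hp' : ∀ J ∈ hP.toFinset, J ≠ ⊤ → J ≠ ⊤ → J.IsPrime := fun J hJ _ _ =>
    hprime J (hP.mem_toFinset.mp hJ)
  obtain ⟨J, hJmem, hJle⟩ :=
    (Ideal.subset_union_prime (f := fun J : Ideal R => J) ⊤ ⊤ hp').mp hsub
  exact hnle J (hP.mem_toFinset.mp hJmem) hJle

/-- Pick an element of the maximal ideal avoiding finitely many primes, all distinct
from the maximal ideal. -/
theorem pick_nzd [IsLocalRing R] (P : Set (Ideal R)) (hP : P.Finite)
    (hprime : ∀ p ∈ P, p.IsPrime) (hne : ∀ p ∈ P, p ≠ maximalIdeal R) :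
    ∃ x ∈ maximalIdeal R, ∀ p ∈ P, x ∉ p := by
  refine pick_avoid' _ P hP hprime (fun p hp hle => hne p hp ?_)
  exact le_antisymm (IsLocalRing.le_maximalIdeal (hprime p hp).ne_top) hle

/-- The classical exchange trick: if `M/xM` has a socle element and `y ∈ 𝔪` is
`M`-regular, then `M/yM` has a socle element. -/
theorem exchange [IsLocalRing R] {C : Type u} [AddCommGroup C] [Module R C] {x y : R}
    (hx : IsSMulRegular C x) (hy : IsSMulRegular C y) (hym : y ∈ maximalIdeal R)
    (hsoc : HasSocle R (C ⧸ (x • ⊤ : Submodule R C))) :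
    HasSocle R (C ⧸ (y • ⊤ : Submodule R C)) := by
  obtain ⟨zb, hzb, hzsoc⟩ := hsoc
  obtain ⟨u, rfl⟩ := Submodule.mkQ_surjective _ zb
  have hu : u ∉ (x • ⊤ : Submodule R C) := fun h => hzb ((Submodule.Quotient.mk_eq_zero _).mpr h)
  have hau : ∀ a ∈ maximalIdeal R, ∃ w, x • w = a • u := by
    intro a ha
    have h0 := hzsoc a ha
    rw [← map_smul, Submodule.mkQ_apply, Submodule.Quotient.mk_eq_zero] at h0
    rcases h0 with ⟨w, -, hw⟩
    exact ⟨w, hw⟩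
  obtain ⟨v, hv⟩ := hau y hym
  refine ⟨Submodule.mkQ _ v, ?_, ?_⟩
  · intro h
    rw [Submodule.mkQ_apply, Submodule.Quotient.mk_eq_zero] at h
    rcases h with ⟨w, -, hw⟩
    have hw' : y • w = v := hw
    refine hu ⟨w, trivial, hy ?_⟩
    calc y • (x • w) = x • (y • w) := smul_comm y x w
    _ = x • v := by rw [hw']
    _ = y • u := hv
  · intro a ha
    obtain ⟨w, hw⟩ := hau a ha
    rw [← map_smul, Submodule.mkQ_apply, Submodule.Quotient.mk_eq_zero]
    refine ⟨w, trivial, hx ?_⟩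
    show x • (y • w) = x • (a • v)
    calc x • (y • w) = y • (x • w) := smul_comm x y w
    _ = y • (a • u) := by rw [hw]
    _ = a • (y • u) := smul_comm y a u
    _ = a • (x • v) := by rw [hv]
    _ = x • (a • v) := smul_comm a x v

section Star

variable [IsLocalRing R] [IsNoetherianRing R]

lemma regular_of_avoid_assoc {C : Type u} [AddCommGroup C] [Module R C] {z : R}
    {P : Set (Ideal R)} (hz : ∀ p ∈ P, z ∉ p) (hsub : associatedPrimes R C ⊆ P) :
    IsSMulRegular C z := by
  by_contra hreg
  have hz' : z ∈ ⋃ p ∈ associatedPrimes R C, (p : Set R) := by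
    rw [biUnion_associatedPrimes_eq_compl_regular R C]
    exact hreg
  obtain ⟨p, hp, hzp⟩ := Set.mem_iUnion₂.mp hz'
  exact hz p (hsub hp) hzp

theorem star : ∀ (n : ℕ) (M : Type u) [AddCommGroup M] [Module R M] [Module.Finite R M]
    (xs : List R), xs.length = n → (∀ r ∈ xs, r ∈ maximalIdeal R) → IsWeaklyRegular M xs →
    HasSocle R (M ⧸ (Ideal.ofList xs • ⊤ : Submodule R M)) →
    ∀ ys : List R, (∀ r ∈ ys, r ∈ maximalIdeal R) → IsWeaklyRegular M ys → ys.length ≤ n := by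
  intro n
  induction n with
  | zero =>
    intro M _ _ _ xs hlen hmem hreg hsoc ys hysmem hysreg
    rw [List.length_eq_zero_iff] at hlen
    subst hlen
    match ys, hysreg with
    | [], _ => exact le_refl 0
    | y :: t, hysreg =>
      exfalso
      have hyreg : IsSMulRegular M y := ((isWeaklyRegular_cons_iff M y t).mp hysreg).1
      have e : (M ⧸ (Ideal.ofList ([] : List R) • ⊤ : Submodule R M)) ≃ₗ[R] M :=
        Submodule.quotEquivOfEqBot _ (by rw [Ideal.ofList_nil, Submodule.bot_smul])
      have hsocM : HasSocle R M := (hasSocle_congr e).mp hsoc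
      exact not_hasSocle_of_regular (hysmem y List.mem_cons_self) hyreg hsocM
  | succ n IH =>
    intro M _ _ _ xs hlen hmem hreg hsoc ys hysmem hysreg
    by_contra hcon
    push_neg at hcon
    -- work with the truncation of ys to length n+2
    set ys' := ys.take (n+2) with hys'
    have hys'len : ys'.length = n + 2 := by
      rw [hys', List.length_take]; omega
    have hys'mem : ∀ r ∈ ys', r ∈ maximalIdeal R :=
      fun r hr => hysmem r ((List.take_sublist _ _).subset hr)
    have hys'reg : IsWeaklyRegular M ys' :=
      ((isWeaklyRegular_append_iff M _ _).mp ((List.take_append_drop (n+2) ys) ▸ hysreg)).1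
    -- the finitely many associated primes to avoid
    set P : Set (Ideal R) :=
      (⋃ i ∈ Finset.range (n+1),
        associatedPrimes R (M ⧸ (Ideal.ofList (xs.take i) • ⊤ : Submodule R M))) ∪
      (⋃ j ∈ Finset.range (n+2),
        associatedPrimes R (M ⧸ (Ideal.ofList (ys'.take j) • ⊤ : Submodule R M))) with hP
    have hPfin : P.Finite := by
      apply Set.Finite.union <;>
        exact Set.Finite.biUnion (Finset.finite_toSet _) (fun i _ => associatedPrimes_finite _)
    have hPmem : ∀ p ∈ P, p.IsPrime ∧ p ≠ maximalIdeal R := by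
      intro p hp
      rcases (Set.mem_union _ _ _).mp hp with h | h
      · obtain ⟨i, hi, hpi⟩ := Set.mem_iUnion₂.mp h
        have hi' : i < xs.length := by rw [hlen]; exact Finset.mem_range.mp hi
        exact ⟨hpi.isPrime, assoc_ne_max_of_regular (hmem _ (xs.getElem_mem hi'))
          (hreg.regular_mod_prev i hi') p hpi⟩
      · obtain ⟨j, hj, hpj⟩ := Set.mem_iUnion₂.mp h
        have hj' : j < ys'.length := by rw [hys'len]; exact Finset.mem_range.mp hj
        exact ⟨hpj.isPrime, assoc_ne_max_of_regular (hys'mem _ (ys'.getElem_mem hj'))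
          (hys'reg.regular_mod_prev j hj') p hpj⟩
    obtain ⟨z, hzm, hzP⟩ := pick_nzd P hPfin (fun p hp => (hPmem p hp).1)
      (fun p hp => (hPmem p hp).2)
    -- z is regular on all the partial quotients
    have hzxs : ∀ i, i ≤ n →
        IsSMulRegular (M ⧸ (Ideal.ofList (xs.take i) • ⊤ : Submodule R M)) z := by
      intro i hi
      refine regular_of_avoid_assoc hzP (fun p hp => Set.mem_union_left _ ?_)
      exact Set.mem_iUnion₂.mpr ⟨i, Finset.mem_range.mpr (by omega), hp⟩
    have hzys : ∀ j, j ≤ n + 1 →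
        IsSMulRegular (M ⧸ (Ideal.ofList (ys'.take j) • ⊤ : Submodule R M)) z := by
      intro j hj
      refine regular_of_avoid_assoc hzP (fun p hp => Set.mem_union_right _ ?_)
      exact Set.mem_iUnion₂.mpr ⟨j, Finset.mem_range.mpr (by omega), hp⟩
    -- decompose xs
    have hnlt : n < xs.length := by omega
    set xl := xs[n] with hxl
    have hxs_decomp : xs = xs.take n ++ [xl] := by
      conv_lhs => rw [← List.take_length (l := xs), hlen]
      rw [List.take_succ, List.getElem?_eq_getElem hnlt]
      simp [hxl]
    have hmem_take : ∀ r ∈ xs.take n, r ∈ maximalIdeal R :=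
      fun r hr => hmem r ((List.take_sublist _ _).subset hr)
    have hreg_take : IsWeaklyRegular M (xs.take n) :=
      ((isWeaklyRegular_append_iff M _ _).mp ((List.take_append_drop n xs) ▸ hreg)).1
    have hxl_reg : IsSMulRegular (M ⧸ (Ideal.ofList (xs.take n) • ⊤ : Submodule R M)) xl :=
      hreg.regular_mod_prev n hnlt
    -- socle of (M/(xs.take n)) / xl
    have hsoc1 : HasSocle R ((M ⧸ (Ideal.ofList (xs.take n) • ⊤ : Submodule R M)) ⧸
        (xl • ⊤ : Submodule R (M ⧸ (Ideal.ofList (xs.take n) • ⊤ : Submodule R M)))) := by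
      have heq : Ideal.ofList xs = Ideal.ofList (xl :: xs.take n) := by
        refine congrArg Ideal.span (Set.ext fun r => List.Perm.mem_iff ?_)
        conv_lhs => rw [hxs_decomp]
        exact List.perm_append_singleton xl (xs.take n)
      have e := (Submodule.quotEquivOfEq (Ideal.ofList xs • ⊤)
          (Ideal.ofList (xl :: xs.take n) • ⊤) (by rw [heq])) ≪≫ₗ
        Submodule.quotOfListConsSMulTopEquivQuotSMulTopOuter M xl (xs.take n)
      exact (hasSocle_congr e).mp hsoc
    -- exchange xl for z
    have hsoc2 := exchange hxl_reg (hzxs n le_rfl) hzm hsoc1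
    -- transfer to the module M' = M/zM
    have e2 : ((M ⧸ (Ideal.ofList (xs.take n) • ⊤ : Submodule R M)) ⧸
          (z • ⊤ : Submodule R (M ⧸ (Ideal.ofList (xs.take n) • ⊤ : Submodule R M)))) ≃ₗ[R]
        ((QuotSMulTop z M) ⧸ (Ideal.ofList (xs.take n) • ⊤ : Submodule R (QuotSMulTop z M))) :=
      (Submodule.quotOfListConsSMulTopEquivQuotSMulTopOuter M z (xs.take n)).symm ≪≫ₗ
        Submodule.quotOfListConsSMulTopEquivQuotSMulTopInner M z (xs.take n)
    have hsoc3 : HasSocle R ((QuotSMulTop z M) ⧸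
        (Ideal.ofList (xs.take n) • ⊤ : Submodule R (QuotSMulTop z M))) :=
      (hasSocle_congr e2).mp hsoc2
    -- xs.take n is weakly regular on M' := M/zM
    have hwreg_zxs : IsWeaklyRegular M (z :: xs.take n) := by
      refine IsLocalRing.isWeaklyRegular_of_perm_of_subset_maximalIdeal ?_
        (List.perm_append_singleton z (xs.take n)) ?_
      · rw [isWeaklyRegular_append_iff]
        exact ⟨hreg_take, (isWeaklyRegular_singleton_iff _ z).mpr (hzxs n le_rfl)⟩
      · intro r hr
        rcases List.mem_append.mp hr with h | h
        · exact hmem_take r h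
        · rw [List.mem_singleton.mp h]; exact hzm
    have hwreg_xs' : IsWeaklyRegular (QuotSMulTop z M) (xs.take n) :=
      ((isWeaklyRegular_cons_iff M z (xs.take n)).mp hwreg_zxs).2
    -- ys'.take (n+1) is weakly regular on M'
    have hys''len : (ys'.take (n+1)).length = n + 1 := by
      rw [List.length_take]; omega
    have hys''mem : ∀ r ∈ ys'.take (n+1), r ∈ maximalIdeal R :=
      fun r hr => hys'mem r ((List.take_sublist _ _).subset hr)
    have hys''reg : IsWeaklyRegular M (ys'.take (n+1)) :=
      ((isWeaklyRegular_append_iff M _ _).mp ((List.take_append_drop (n+1) ys') ▸ hys'reg)).1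
    have hwreg_zys : IsWeaklyRegular M (z :: ys'.take (n+1)) := by
      refine IsLocalRing.isWeaklyRegular_of_perm_of_subset_maximalIdeal ?_
        (List.perm_append_singleton z (ys'.take (n+1))) ?_
      · rw [isWeaklyRegular_append_iff]
        refine ⟨hys''reg, (isWeaklyRegular_singleton_iff _ z).mpr ?_⟩
        exact hzys (n+1) le_rfl
      · intro r hr
        rcases List.mem_append.mp hr with h | h
        · exact hys''mem r h
        · rw [List.mem_singleton.mp h]; exact hzm
    have hwreg_ys'' : IsWeaklyRegular (QuotSMulTop z M) (ys'.take (n+1)) :=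
      ((isWeaklyRegular_cons_iff M z (ys'.take (n+1))).mp hwreg_zys).2
    -- apply the induction hypothesis
    have := IH (QuotSMulTop z M) (xs.take n)
      (by rw [List.length_take]; omega) hmem_take hwreg_xs' hsoc3
      (ys'.take (n+1)) hys''mem hwreg_ys''
    omega

end Star

theorem engine [IsLocalRing R] [IsNoetherianRing R]
    (X : ∀ (M : Type u) [AddCommGroup M] [Module R M], Prop) (hX : IsPrethick R X)
    (N : Type u) [AddCommGroup N] [Module R N] [Module.Finite R N]
    (A : Type u) [AddCommGroup A] [Module R A] [Module.Finite R A]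
    (hsocA : ¬ HasSocle R A) (hsocN : HasSocle R N) (hXN : X N)
    (hXq : ∀ y ∈ maximalIdeal R, IsSMulRegular A y → X (N ⧸ (y • ⊤ : Submodule R N))) :
    X (ResidueField R) := by
  classical
  -- the 𝔪-power torsion submodule Γ of N
  let F : ℕ →o Submodule R N :=
    ⟨fun n => Submodule.torsionBySet R N ((maximalIdeal R ^ n : Ideal R) : Set R),
     fun a b hab => Submodule.torsionBySet_le_torsionBySet_of_subset
       (fun x hx => Ideal.pow_le_pow_right hab hx)⟩
  obtain ⟨n₀, hn₀⟩ := (monotone_stabilizes_iff_noetherian.mpr inferInstance) F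
  set n₁ := n₀ + 1 with hn₁
  set Γ : Submodule R N := F n₁ with hΓdef
  have hkill : ∀ a ∈ (maximalIdeal R)^n₁, ∀ u ∈ Γ, a • u = 0 := by
    intro a ha u hu
    exact (Submodule.mem_torsionBySet_iff _ u).mp hu ⟨a, ha⟩
  have habsorb : ∀ u : N, (∀ a ∈ maximalIdeal R, a • u ∈ Γ) → u ∈ Γ := by
    intro u hu
    have hstab : F (n₁ + 1) = Γ := by
      rw [hΓdef, ← hn₀ n₁ (by omega), ← hn₀ (n₁+1) (by omega)]
    rw [← hstab]
    refine (Submodule.mem_torsionBySet_iff _ u).mpr ?_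
    rintro ⟨a, ha⟩
    show a • u = 0
    have hmem : a ∈ (maximalIdeal R)^n₁ * maximalIdeal R := by
      rwa [← pow_succ]
    clear ha
    refine Submodule.mul_induction_on hmem ?_ ?_
    · intro r hr s hs
      rw [mul_smul]
      exact hkill r hr _ (hu s hs)
    · intro x y hx hy
      rw [add_smul, hx, hy, add_zero]
  have hΓne : Γ ≠ ⊥ := by
    obtain ⟨z, hz0, hzsoc⟩ := hsocN
    refine Submodule.ne_bot_iff _ |>.mpr ⟨z, ?_, hz0⟩
    refine (Submodule.mem_torsionBySet_iff _ z).mpr ?_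
    rintro ⟨a, ha⟩
    have : maximalIdeal R ^ n₁ ≤ maximalIdeal R := by
      calc maximalIdeal R ^ n₁ ≤ maximalIdeal R ^ 1 := Ideal.pow_le_pow_right (by omega)
      _ = maximalIdeal R := pow_one _
    exact hzsoc a (this ha)
  have hsocQΓ : ¬ HasSocle R (N ⧸ Γ) := by
    rintro ⟨zb, hzb, hzsoc⟩
    obtain ⟨u, rfl⟩ := Submodule.mkQ_surjective _ zb
    refine hzb ((Submodule.Quotient.mk_eq_zero _).mpr (habsorb u fun a ha => ?_))
    have := hzsoc a ha
    rwa [← map_smul, Submodule.mkQ_apply, Submodule.Quotient.mk_eq_zero] at this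
  have hannΓ : (maximalIdeal R)^n₁ ≤ Γ.annihilator := fun a ha =>
    Submodule.mem_annihilator.mpr fun u hu => hkill a ha u hu
  -- the finitely many primes to avoid
  set P : Set (Ideal R) := associatedPrimes R A ∪ associatedPrimes R (N ⧸ Γ) with hPdef
  have hPfin : P.Finite := (associatedPrimes_finite A).union (associatedPrimes_finite (N ⧸ Γ))
  have hPprime : ∀ p ∈ P, p.IsPrime := by
    intro p hp
    rcases (Set.mem_union _ _ _).mp hp with h | h
    exacts [h.isPrime, h.isPrime]
  have hPne : ∀ p ∈ P, p ≠ maximalIdeal R := by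
    intro p hp heq
    subst heq
    rcases (Set.mem_union _ _ _).mp hp with h | h
    · exact hsocA ((hasSocle_iff_assoc A).mpr h)
    · exact hsocQΓ ((hasSocle_iff_assoc _).mpr h)
  have hPnle : ∀ p ∈ P, ¬ maximalIdeal R ≤ p := fun p hp hle =>
    hPne p hp (le_antisymm (IsLocalRing.le_maximalIdeal (hPprime p hp).ne_top) hle)
  -- good scalars
  set S : R → Prop := fun y =>
    y ∈ maximalIdeal R ∧ IsSMulRegular A y ∧ IsSMulRegular (N ⧸ Γ) y with hSdef
  have hkerle : ∀ y : R, IsSMulRegular (N ⧸ Γ) y →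
      LinearMap.ker (LinearMap.lsmul R N y) ≤ Γ := by
    intro y hy u hu
    rw [LinearMap.mem_ker, LinearMap.lsmul_apply] at hu
    have h0 : y • (Γ.mkQ u) = y • (0 : N ⧸ Γ) := by
      rw [smul_zero, ← map_smul, hu, map_zero]
    have := hy h0
    rwa [Submodule.mkQ_apply, Submodule.Quotient.mk_eq_zero] at this
  -- X-membership of building blocks
  have XyTop : ∀ y : R, S y → X ↥(y • (⊤ : Submodule R N)) := by
    intro y hy
    refine hX.closed_ker_epi _ N (N ⧸ (y • ⊤ : Submodule R N))
      (Submodule.subtype _) (Submodule.mkQ _) (Submodule.injective_subtype _)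
      (Submodule.mkQ_surjective _) ?_ hXN (hXq y hy.1 hy.2.1)
    rw [Submodule.range_subtype, Submodule.ker_mkQ]
  have Xker : ∀ y : R, S y → X ↥(LinearMap.ker (LinearMap.lsmul R N y)) := by
    intro y hy
    have hcod : ∀ c : N, (LinearMap.lsmul R N y) c ∈ (y • ⊤ : Submodule R N) := fun c =>
      Submodule.smul_mem_pointwise_smul c y ⊤ Submodule.mem_top
    refine hX.closed_ker_epi _ N ↥(y • (⊤ : Submodule R N))
      (Submodule.subtype _) (LinearMap.codRestrict _ _ hcod)
      (Submodule.injective_subtype _) ?_ ?_ hXN (XyTop y hy)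
    · rintro ⟨w, hw⟩
      obtain ⟨v, -, hv⟩ := hw
      exact ⟨v, Subtype.ext hv⟩
    · rw [Submodule.range_subtype, LinearMap.ker_codRestrict]
  -- Γ itself is in X
  obtain ⟨x, hxann, hxP⟩ := pick_avoid' Γ.annihilator P hPfin hPprime (by
    intro p hp hle
    exact hPnle p hp ((Ideal.IsPrime.pow_le_iff (hP := hPprime p hp) (n := n₁)
      (by omega)).mp (le_trans hannΓ hle)))
  have hxm : x ∈ maximalIdeal R := by
    refine IsLocalRing.le_maximalIdeal (fun htop => ?_) hxann
    obtain ⟨w, hwΓ, hw0⟩ := (Submodule.ne_bot_iff _).mp hΓne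
    have := Submodule.mem_annihilator.mp (htop ▸ (Submodule.mem_top : (1:R) ∈ ⊤)) w hwΓ
    rw [one_smul] at this
    exact hw0 this
  have hxA : IsSMulRegular A x :=
    regular_of_avoid_assoc hxP (fun p hp => Set.mem_union_left _ hp)
  have hxQ : IsSMulRegular (N ⧸ Γ) x :=
    regular_of_avoid_assoc hxP (fun p hp => Set.mem_union_right _ hp)
  have hkerx : LinearMap.ker (LinearMap.lsmul R N x) = Γ := by
    refine le_antisymm (hkerle x hxQ) (fun u hu => ?_)
    rw [LinearMap.mem_ker, LinearMap.lsmul_apply]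
    exact Submodule.mem_annihilator.mp hxann u hu
  have XΓ : X ↥Γ := hkerx ▸ Xker x ⟨hxm, hxA, hxQ⟩
  -- s • Γ is in X for good s
  have XsΓ : ∀ s : R, S s → X ↥(s • Γ) := by
    intro s hs
    have hresmem : ∀ u ∈ Γ, (LinearMap.lsmul R N s) u ∈ s • Γ := fun u hu =>
      Submodule.smul_mem_pointwise_smul u s Γ hu
    refine hX.closed_coker_mono ↥(LinearMap.ker (LinearMap.lsmul R N s)) ↥Γ ↥(s • Γ)
      (Submodule.inclusion (hkerle s hs.2.2)) ((LinearMap.lsmul R N s).restrict hresmem)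
      (Submodule.inclusion_injective _) ?_ ?_ (Xker s hs) XΓ
    · rintro ⟨w, hw⟩
      obtain ⟨v, hv, hveq⟩ := hw
      exact ⟨⟨v, hv⟩, Subtype.ext hveq⟩
    · ext u
      simp only [LinearMap.mem_range, LinearMap.mem_ker]
      constructor
      · rintro ⟨⟨v, hv⟩, rfl⟩
        rw [LinearMap.mem_ker, LinearMap.lsmul_apply] at hv
        exact Subtype.ext (by simpa [LinearMap.restrict_apply] using hv)
      · intro hu
        have hu' : s • (u : N) = 0 := by
          have := congrArg Subtype.val hu
          simpa [LinearMap.restrict_apply] using this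
        exact ⟨⟨(u : N), LinearMap.mem_ker.mpr (by rw [LinearMap.lsmul_apply]; exact hu')⟩,
          Subtype.ext rfl⟩
  -- main descent by noetherian induction on ker(t) ⊓ Γ
  have main : ∀ D : Submodule R N, ∀ t : R, (t = 1 ∨ S t) → t • Γ ≠ ⊥ →
      D = LinearMap.ker (LinearMap.lsmul R N t) ⊓ Γ → X (ResidueField R) := by
    intro D
    refine IsNoetherian.induction (P := fun D : Submodule R N =>
      ∀ t : R, (t = 1 ∨ S t) → t • Γ ≠ ⊥ →
        D = LinearMap.ker (LinearMap.lsmul R N t) ⊓ Γ → X (ResidueField R)) ?_ D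
    clear D
    intro D IH t ht hWne hD
    have hXW : X ↥(t • Γ) := by
      rcases ht with rfl | hSt
      · have h1 : (1:R) • Γ = Γ := one_smul _ Γ
        rw [h1]
        exact XΓ
      · exact XsΓ t hSt
    have hWΓ : t • Γ ≤ Γ := by
      rintro _ ⟨g, hg, rfl⟩
      exact Γ.smul_mem t hg
    -- W has a socle element
    haveI : Nontrivial ↥(t • Γ) := Submodule.nontrivial_iff_ne_bot.mpr hWne
    obtain ⟨p, hp⟩ := associatedPrimes.nonempty R ↥(t • Γ)
    have hmp : (maximalIdeal R)^n₁ ≤ (⊤ : Submodule R ↥(t • Γ)).annihilator := by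
      intro a ha
      refine Submodule.mem_annihilator.mpr fun w _ => Subtype.ext ?_
      exact hkill a ha _ (hWΓ w.2)
    have hpm : p = maximalIdeal R := by
      have h1 : maximalIdeal R ≤ p := (Ideal.IsPrime.pow_le_iff (hP := hp.isPrime)
        (n := n₁) (by omega)).mp (le_trans hmp hp.annihilator_le)
      exact le_antisymm (IsLocalRing.le_maximalIdeal hp.isPrime.ne_top) h1
    have hsocW : HasSocle R ↥(t • Γ) := (hasSocle_iff_assoc _).mpr (hpm ▸ hp)
    obtain ⟨z, hz0, hzsoc⟩ := hsocW
    by_cases hmW : maximalIdeal R ≤ (t • Γ).annihilator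
    · -- terminal case : 𝔪 • W = 0, so W ≅ k^d and k is a summand
      have htors : Module.IsTorsionBySet R ↥(t • Γ) ((maximalIdeal R : Ideal R) : Set R) := by
        rintro w ⟨a, ha⟩
        exact Subtype.ext (Submodule.mem_annihilator.mp (hmW ha) _ w.2)
      letI kMod : Module (ResidueField R) ↥(t • Γ) := htors.module
      haveI ktow : IsScalarTower R (ResidueField R) ↥(t • Γ) := htors.isScalarTower
      haveI : Module.Finite (ResidueField R) ↥(t • Γ) :=
        Module.Finite.of_restrictScalars_finite R _ _
      obtain ⟨q, hq⟩ := Submodule.exists_isCompl (Submodule.span (ResidueField R) {z})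
      have hz0' : z ≠ 0 := hz0
      let e : ↥(t • Γ) ≃ₗ[ResidueField R] (ResidueField R) × ↥q :=
        (Submodule.prodEquivOfIsCompl _ _ hq).symm ≪≫ₗ
          LinearEquiv.prodCongr
            (LinearEquiv.toSpanNonzeroSingleton (ResidueField R) ↥(t • Γ) z hz0').symm
            (LinearEquiv.refl (ResidueField R) ↥q)
      haveI : Module.Finite R (ResidueField R) :=
        Module.Finite.of_surjective (IsLocalRing.maximalIdeal R).mkQ (Submodule.mkQ_surjective _)
      haveI : Module.Finite (ResidueField R) ↥q := by
        haveI : IsNoetherian (ResidueField R) ↥(t • Γ) := inferInstance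
        exact Module.Finite.iff_fg.mpr (IsNoetherian.noetherian q)
      haveI : Module.Finite R ↥q := Module.Finite.trans (ResidueField R) ↥q
      exact hX.closed_summand ↥(t • Γ) (ResidueField R) ↥q (e.restrictScalars R) hXW
    · -- descent case
      obtain ⟨y, hym, hyW, hyP⟩ := pick_avoid (maximalIdeal R) (t • Γ).annihilator hmW P hPfin
        hPprime hPnle
      have hSy : S y := ⟨hym,
        regular_of_avoid_assoc hyP (fun p hp => Set.mem_union_left _ hp),
        regular_of_avoid_assoc hyP (fun p hp => Set.mem_union_right _ hp)⟩
      have hSt' : S (y * t) := by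
        rcases ht with rfl | hSt
        · rwa [mul_one]
        · exact ⟨Ideal.mul_mem_right _ _ hym, hSy.2.1.mul hSt.2.1, hSy.2.2.mul hSt.2.2⟩
      have hyWne : (y * t) • Γ ≠ ⊥ := by
        rw [mul_smul]
        have hex : ∃ w ∈ t • Γ, y • w ≠ 0 := by
          by_contra hcon
          push_neg at hcon
          exact hyW (Submodule.mem_annihilator.mpr hcon)
        obtain ⟨w, hw, hwne⟩ := hex
        exact (Submodule.ne_bot_iff _).mpr
          ⟨y • w, Submodule.smul_mem_pointwise_smul w y (t • Γ) hw, hwne⟩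
      -- the kernel strictly increases
      obtain ⟨g, hgΓ, hgeq⟩ : ∃ g ∈ Γ, t • g = (z : N) := by
        obtain ⟨g, hg, hgeq⟩ := z.2
        exact ⟨g, hg, hgeq⟩
      have hywz : y • (z : N) = 0 := by
        have := hzsoc y hym
        exact congrArg Subtype.val this
      have hDlt : D < LinearMap.ker (LinearMap.lsmul R N (y * t)) ⊓ Γ := by
        rw [hD]
        refine lt_of_le_of_ne ?_ (fun heq => ?_)
        · intro u hu
          rw [Submodule.mem_inf] at hu ⊢
          have hu1 : t • u = 0 := hu.1
          refine ⟨?_, hu.2⟩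
          show (y * t) • u = 0
          rw [mul_smul, hu1, smul_zero]
        · have hgmem : g ∈ LinearMap.ker (LinearMap.lsmul R N (y * t)) ⊓ Γ := by
            rw [Submodule.mem_inf]
            refine ⟨?_, hgΓ⟩
            show (y * t) • g = 0
            rw [mul_smul, hgeq, hywz]
          rw [← heq, Submodule.mem_inf] at hgmem
          have hg1 : t • g = 0 := hgmem.1
          rw [hgeq] at hg1
          exact hz0 (Subtype.ext hg1)
      exact IH _ hDlt (y * t) (Or.inr hSt') hyWne rfl
  refine main (LinearMap.ker (LinearMap.lsmul R N 1) ⊓ Γ) 1 (Or.inl rfl) ?_ rfl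
  rwa [one_smul]

lemma le_moduleDepth [IsLocalRing R] {M : Type u} [AddCommGroup M] [Module R M] {xs : List R}
    (hmem : ∀ r ∈ xs, r ∈ maximalIdeal R) (hreg : IsWeaklyRegular M xs) :
    (xs.length : ℕ∞) ≤ moduleDepth R M :=
  le_sSup ⟨xs, hmem, hreg, rfl⟩

lemma moduleDepth_le [IsLocalRing R] {M : Type u} [AddCommGroup M] [Module R M] (n : ℕ)
    (h : ∀ ys : List R, (∀ r ∈ ys, r ∈ maximalIdeal R) → IsWeaklyRegular M ys →
      ys.length ≤ n) : moduleDepth R M ≤ (n : ℕ∞) := by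
  refine sSup_le ?_
  rintro e ⟨ys, hmem, hreg, rfl⟩
  exact_mod_cast h ys hmem hreg

lemma exists_maximal_double [IsLocalRing R] [IsNoetherianRing R]
    (M : Type u) [AddCommGroup M] [Module R M] [Module.Finite R M] :
    ∃ xs : List R, (∀ r ∈ xs, r ∈ maximalIdeal R) ∧ IsWeaklyRegular R xs ∧ IsWeaklyRegular M xs ∧
      ¬ ∃ y ∈ maximalIdeal R,
          IsSMulRegular (R ⧸ (Ideal.ofList xs • ⊤ : Submodule R R)) y ∧
          IsSMulRegular (M ⧸ (Ideal.ofList xs • ⊤ : Submodule R M)) y := by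
  classical
  by_contra hcon
  push_neg at hcon
  have step : ∀ xs : List R, (∀ r ∈ xs, r ∈ maximalIdeal R) → IsWeaklyRegular R xs →
      IsWeaklyRegular M xs →
      ∃ xs' : List R, ((∀ r ∈ xs', r ∈ maximalIdeal R) ∧ IsWeaklyRegular R xs' ∧
        IsWeaklyRegular M xs') ∧ Ideal.ofList xs < Ideal.ofList xs' := by
    intro xs hmem1 hreg2 hreg3
    obtain ⟨y, hym, hyR, hyM⟩ := hcon xs hmem1 hreg2 hreg3
    refine ⟨xs ++ [y], ⟨?_, ?_, ?_⟩, ?_⟩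
    · intro r hr
      rcases List.mem_append.mp hr with h | h
      · exact hmem1 r h
      · rw [List.mem_singleton.mp h]; exact hym
    · rw [isWeaklyRegular_append_iff]
      exact ⟨hreg2, (isWeaklyRegular_singleton_iff _ _).mpr hyR⟩
    · rw [isWeaklyRegular_append_iff]
      exact ⟨hreg3, (isWeaklyRegular_singleton_iff _ _).mpr hyM⟩
    · rw [Ideal.ofList_append]
      refine lt_of_le_of_ne le_sup_left (fun h => ?_)
      have hy_mem : y ∈ Ideal.ofList xs := by
        rw [h]
        refine Submodule.mem_sup_right ?_
        rw [Ideal.ofList_singleton]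
        exact Ideal.subset_span rfl
      have hxs_le : Ideal.ofList xs ≤ maximalIdeal R :=
        Ideal.span_le.mpr (fun r hr => hmem1 r hr)
      have hne : Submodule.Quotient.mk (p := (Ideal.ofList xs • ⊤ : Submodule R R)) (1:R) ≠ 0 := by
        rw [Ne, Submodule.Quotient.mk_eq_zero]
        intro hmem1'
        rw [smul_eq_mul, Ideal.mul_top] at hmem1'
        exact (maximalIdeal.isMaximal R).ne_top
          ((Ideal.eq_top_iff_one _).mpr (hxs_le hmem1'))
      apply hne
      have h0 : y • Submodule.Quotient.mk (p := (Ideal.ofList xs • ⊤ : Submodule R R)) (1:R)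
          = 0 := by
        rw [← Submodule.Quotient.mk_smul, Submodule.Quotient.mk_eq_zero]
        simp only [smul_eq_mul, mul_one, Ideal.mul_top]
        exact hy_mem
      refine hyR ?_
      show y • Submodule.Quotient.mk (p := (Ideal.ofList xs • ⊤ : Submodule R R)) (1:R)
          = y • (0 : R ⧸ (Ideal.ofList xs • ⊤ : Submodule R R))
      rw [h0, smul_zero]
  have hT0 : (∀ r ∈ ([]:List R), r ∈ maximalIdeal R) ∧ IsWeaklyRegular R ([]:List R) ∧
      IsWeaklyRegular M ([]:List R) := ⟨by simp, .nil R R, .nil R M⟩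
  let T := {xs : List R // (∀ r ∈ xs, r ∈ maximalIdeal R) ∧ IsWeaklyRegular R xs ∧
    IsWeaklyRegular M xs}
  let stepT : T → T := fun xs =>
    ⟨Classical.choose (step xs.1 xs.2.1 xs.2.2.1 xs.2.2.2),
     (Classical.choose_spec (step xs.1 xs.2.1 xs.2.2.1 xs.2.2.2)).1⟩
  have hstepT : ∀ xs : T, Ideal.ofList xs.1 < Ideal.ofList (stepT xs).1 := fun xs =>
    (Classical.choose_spec (step xs.1 xs.2.1 xs.2.2.1 xs.2.2.2)).2
  let g : ℕ → T := fun n => stepT^[n] (⟨[], hT0⟩ : T)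
  have hgmono : ∀ n, Ideal.ofList (g n).1 < Ideal.ofList (g (n+1)).1 := by
    intro n
    have hit : g (n+1) = stepT (g n) := Function.iterate_succ_apply' stepT n _
    rw [hit]
    exact hstepT (g n)
  let c : ℕ →o Ideal R := ⟨fun n => Ideal.ofList (g n).1,
    monotone_nat_of_le_succ (fun n => (hgmono n).le)⟩
  obtain ⟨n₀, hn₀⟩ := (monotone_stabilizes_iff_noetherian.mpr inferInstance) c
  exact absurd (hn₀ (n₀+1) (by omega)) (hgmono n₀).ne

end AuxPrethick

open scoped Pointwise in
/-- **Theorem 1.2 / 3.1.** If a prethick subcategory `X` of `mod R` contains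
`M/(x₁,…,xᵢ)M` for all `i = 0, …, depth_R M + 1` and all `R`-regular sequences `x₁,…,xᵢ`,
and `depth R ≥ depth_R M + 1`, then `X` contains the residue field `k`. -/
theorem prethick_contains_residueField_of_regularSequences
    (R : Type u) [CommRing R] [IsNoetherianRing R] [IsLocalRing R]
    (X : ∀ (M : Type u) [AddCommGroup M] [Module R M], Prop) (hX : IsPrethick R X)
    (M : Type u) [AddCommGroup M] [Module R M] [Module.Finite R M]
    (h1 : moduleDepth R M + 1 ≤ moduleDepth R R)
    (h2 : ∀ rs : List R, IsRegularSeq R rs → (rs.length : ℕ∞) ≤ moduleDepth R M + 1 →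
      X (M ⧸ (Ideal.ofList rs • ⊤ : Submodule R M))) :
    X (ResidueField R) := by
  classical
  obtain ⟨xs, hmem, hregR, hregM, hnoext⟩ := exists_maximal_double (R := R) M
  -- either R/(xs) or M/(xs)M has a socle element
  have hdich : HasSocle R (R ⧸ (Ideal.ofList xs • ⊤ : Submodule R R)) ∨
      HasSocle R (M ⧸ (Ideal.ofList xs • ⊤ : Submodule R M)) := by
    set A := R ⧸ (Ideal.ofList xs • ⊤ : Submodule R R) with hA
    set B := M ⧸ (Ideal.ofList xs • ⊤ : Submodule R M) with hB
    set P : Set (Ideal R) := associatedPrimes R A ∪ associatedPrimes R B with hP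
    have hPfin : P.Finite := (associatedPrimes_finite A).union (associatedPrimes_finite B)
    have hsub : (maximalIdeal R : Set R) ⊆
        ⋃ p ∈ ((hPfin.toFinset : Finset (Ideal R)) : Set (Ideal R)), (p : Set R) := by
      intro y hy
      have hn : ¬(IsSMulRegular A y ∧ IsSMulRegular B y) := fun hc =>
        hnoext ⟨y, hy, hc.1, hc.2⟩
      have hyP : ∃ p ∈ P, y ∈ p := by
        rcases not_and_or.mp hn with h | h
        · have hy' : y ∈ ⋃ p ∈ associatedPrimes R A, (p : Set R) := by
            rw [biUnion_associatedPrimes_eq_compl_regular R A]; exact h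
          obtain ⟨p, hp, hyp⟩ := Set.mem_iUnion₂.mp hy'
          exact ⟨p, Set.mem_union_left _ hp, hyp⟩
        · have hy' : y ∈ ⋃ p ∈ associatedPrimes R B, (p : Set R) := by
            rw [biUnion_associatedPrimes_eq_compl_regular R B]; exact h
          obtain ⟨p, hp, hyp⟩ := Set.mem_iUnion₂.mp hy'
          exact ⟨p, Set.mem_union_right _ hp, hyp⟩
      obtain ⟨p, hp, hyp⟩ := hyP
      exact Set.mem_biUnion (Finset.mem_coe.mpr (hPfin.mem_toFinset.mpr hp)) hyp
    have hprime : ∀ p ∈ hPfin.toFinset, p ≠ ⊤ → p ≠ ⊤ → p.IsPrime := by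
      intro p hp _ _
      rcases (Set.mem_union _ _ _).mp (hPfin.mem_toFinset.mp hp) with h | h
      exacts [h.isPrime, h.isPrime]
    obtain ⟨p, hpmem, hple⟩ :=
      (Ideal.subset_union_prime (f := fun J : Ideal R => J) ⊤ ⊤ hprime).mp hsub
    have hpP : p ∈ P := hPfin.mem_toFinset.mp hpmem
    have hpprime : p.IsPrime := by
      rcases (Set.mem_union _ _ _).mp hpP with h | h
      exacts [h.isPrime, h.isPrime]
    have hpm : p = maximalIdeal R :=
      le_antisymm (IsLocalRing.le_maximalIdeal hpprime.ne_top) hple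
    rcases (Set.mem_union _ _ _).mp hpP with h | h
    · exact Or.inl ((hasSocle_iff_assoc _).mpr (hpm ▸ h))
    · exact Or.inr ((hasSocle_iff_assoc _).mpr (hpm ▸ h))
  -- a socle element in R/(xs) contradicts depth R ≥ depth M + 1
  have hcontraA : ¬ HasSocle R (R ⧸ (Ideal.ofList xs • ⊤ : Submodule R R)) := by
    intro hsocA
    have hdepthR : moduleDepth R R ≤ (xs.length : ℕ∞) :=
      moduleDepth_le _ (fun ys hm hr => star xs.length R xs rfl hmem hregR hsocA ys hm hr)
    have hdepthM : (xs.length : ℕ∞) ≤ moduleDepth R M := le_moduleDepth hmem hregM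
    have hle : (xs.length : ℕ∞) + 1 ≤ (xs.length : ℕ∞) :=
      le_trans (add_le_add_left hdepthM 1) (le_trans h1 hdepthR)
    have hle2 : ((xs.length + 1 : ℕ) : ℕ∞) ≤ ((xs.length : ℕ) : ℕ∞) := by
      push_cast
      exact hle
    have := Nat.cast_le.mp hle2
    omega
  have hsocB : HasSocle R (M ⧸ (Ideal.ofList xs • ⊤ : Submodule R M)) :=
    hdich.resolve_left hcontraA
  -- feed the engine
  have hlen : (xs.length : ℕ∞) ≤ moduleDepth R M := le_moduleDepth hmem hregM
  have hXN : X (M ⧸ (Ideal.ofList xs • ⊤ : Submodule R M)) :=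
    h2 xs ⟨hmem, hregR⟩ (le_trans hlen le_self_add)
  have hXq : ∀ y ∈ maximalIdeal R,
      IsSMulRegular (R ⧸ (Ideal.ofList xs • ⊤ : Submodule R R)) y →
      X ((M ⧸ (Ideal.ofList xs • ⊤ : Submodule R M)) ⧸
        (y • ⊤ : Submodule R (M ⧸ (Ideal.ofList xs • ⊤ : Submodule R M)))) := by
    intro y hym hyA
    have hmem' : ∀ r ∈ xs ++ [y], r ∈ maximalIdeal R := by
      intro r hr
      rcases List.mem_append.mp hr with h | h
      · exact hmem r h
      · rw [List.mem_singleton.mp h]; exact hym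
    have hregR' : IsRegularSeq R (xs ++ [y]) :=
      ⟨hmem', (isWeaklyRegular_append_iff R xs [y]).mpr
        ⟨hregR, (isWeaklyRegular_singleton_iff _ y).mpr hyA⟩⟩
    have hb : ((xs ++ [y]).length : ℕ∞) ≤ moduleDepth R M + 1 := by
      have : (xs ++ [y]).length = xs.length + 1 := by simp
      rw [this]
      push_cast
      exact add_le_add_left hlen 1
    have hXq0 := h2 (xs ++ [y]) hregR' hb
    have heq : Ideal.ofList (xs ++ [y]) = Ideal.ofList (y :: xs) :=
      congrArg Ideal.span (Set.ext fun r => (List.perm_append_singleton y xs).mem_iff)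
    have e : (M ⧸ (Ideal.ofList (xs ++ [y]) • ⊤ : Submodule R M)) ≃ₗ[R]
        ((M ⧸ (Ideal.ofList xs • ⊤ : Submodule R M)) ⧸
          (y • ⊤ : Submodule R (M ⧸ (Ideal.ofList xs • ⊤ : Submodule R M)))) :=
      (Submodule.quotEquivOfEq _ _ (by rw [heq])) ≪≫ₗ
        Submodule.quotOfListConsSMulTopEquivQuotSMulTopOuter M y xs
    exact hX.closed_iso _ _ e hXq0
  exact engine X hX (M ⧸ (Ideal.ofList xs • ⊤ : Submodule R M))
    (R ⧸ (Ideal.ofList xs • ⊤ : Submodule R R)) hcontraA hsocB hXN hXq
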